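/- arXiv:2111.10924 — 2 statements merged into one kernel-verified Lean document; each statement's English description precedes it below -/
import Mathlib

section
/- Fix n ≥ 1, λ₀ > 0, ρ > 0, and set ξ = (2n+1)(2λ₀)^{2n}, λ = λ₀ + ρ e^{iπ/(4n+2)}. Then for Θ(ξ, λ) = 2i(−ξλ + 2^{2n}λ^{2n+1}) (the phase with n even), one has Re Θ(ξ, λ) = −2^{2n+1} ∑_{k=2}^{2n+1} C(2n+1, k) λ₀^{2n+1−k} ρ^k sin(kπ/(4n+2)) ≤ −2^{2n+1} ρ^{2n+1}, where C(m,k) denotes the binomial coefficient. -/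
/-!
Expanding `λ^{2n+1} = (λ₀ + ρ e^{iθ})^{2n+1}` binomially writes `Re Θ` as a sum of
`C(2n+1,k) λ₀^{2n+1-k} ρ^k sin(kθ)`. The value of `ξ` makes `λ₀` a stationary point of the
phase, so the `k = 1` term cancels against `-ξλ` (and `k = 0` has `sin 0 = 0`). With
`θ = π/(4n+2)` all remaining terms are nonnegative, and the top one is exactly `ρ^{2n+1}`
because `(2n+1)θ = π/2`.
-/

open Real

open Complex in
theorem im_ofReal_add_mul_exp_pow (a r θ : ℝ) (m : ℕ) :
    (((a : ℂ) + r * exp (θ * I)) ^ m).im =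
      ∑ k ∈ Finset.range (m + 1), (m.choose k : ℝ) * a ^ (m - k) * r ^ k * Real.sin (k * θ) := by
  rw [add_comm, add_pow, im_sum]
  refine Finset.sum_congr rfl fun k _ => ?_
  have hterm : ((r : ℂ) * exp (θ * I)) ^ k * a ^ (m - k) * m.choose k =
      ((m.choose k * a ^ (m - k) * r ^ k : ℝ) : ℂ) * exp ((k * θ : ℝ) * I) := by
    rw [mul_pow, ← Complex.exp_nat_mul, ← mul_assoc]
    push_cast
    ring
  rw [hterm, im_ofReal_mul, exp_ofReal_mul_I_im]

theorem sum_range_succ_eq_add_sum_Icc_two (f : ℕ → ℝ) {m : ℕ} (hm : 1 ≤ m) :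
    ∑ k ∈ Finset.range (m + 1), f k = f 0 + f 1 + ∑ k ∈ Finset.Icc 2 m, f k := by
  rw [← Finset.sum_range_add_sum_Ico f (by omega : 2 ≤ m + 1), Finset.sum_range_succ,
    Finset.sum_range_one, Finset.Ico_add_one_right_eq_Icc]

open Complex in
theorem re_two_I_mul (ξ : ℝ) (j : ℕ) (z w : ℂ) :
    (2 * I * (-(ξ : ℂ) * z + 2 ^ j * w)).re = 2 * ξ * z.im - 2 ^ (j + 1) * w.im := by
  rw [← ofReal_ofNat, ← ofReal_pow]
  simp only [mul_re, mul_im, add_im, neg_re, neg_im, I_re, I_im, ofReal_re, ofReal_im]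
  ring

theorem pow_mul_sin_le_sum_Icc_two (a r θ : ℝ) {m : ℕ} (hm : 2 ≤ m) (ha : 0 ≤ a) (hr : 0 ≤ r)
    (hθ : 0 ≤ θ) (hmθ : m * θ ≤ π) :
    r ^ m * Real.sin (m * θ) ≤
      ∑ k ∈ Finset.Icc 2 m, (m.choose k : ℝ) * a ^ (m - k) * r ^ k * Real.sin (k * θ) := by
  have hnonneg : ∀ k ∈ Finset.Icc 2 m,
      0 ≤ (m.choose k : ℝ) * a ^ (m - k) * r ^ k * Real.sin (k * θ) := fun k hk => by
    have hkm : (k : ℝ) ≤ m := by exact_mod_cast (Finset.mem_Icc.1 hk).2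
    have := sin_nonneg_of_nonneg_of_le_pi (by positivity)
      ((mul_le_mul_of_nonneg_right hkm hθ).trans hmθ)
    positivity
  calc r ^ m * Real.sin (m * θ)
      = (m.choose m : ℝ) * a ^ (m - m) * r ^ m * Real.sin (m * θ) := by simp
    _ ≤ _ := Finset.single_le_sum hnonneg (Finset.mem_Icc.2 ⟨hm, le_rfl⟩)

/-- Phase decay along the deformed ray from the stationary point `λ₀`: with
`ξ = (2n+1)(2λ₀)^{2n}` and `λ = λ₀ + ρ e^{iπ/(4n+2)}`, the phase
`Θ(ξ,λ) = 2i(−ξλ + 2^{2n}λ^{2n+1})` satisfies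
`Re Θ = −2^{2n+1} ∑_{k=2}^{2n+1} C(2n+1,k) λ₀^{2n+1−k} ρ^k sin(kπ/(4n+2))
      ≤ −2^{2n+1} ρ^{2n+1}`. -/
theorem phase_decay_deformed_ray (n : ℕ) (hn : 1 ≤ n)
    (lam₀ : ℝ) (hlam₀ : 0 < lam₀) (ρ : ℝ) (hρ : 0 < ρ)
    (ξ : ℝ) (hξ : ξ = (2 * n + 1) * (2 * lam₀) ^ (2 * n))
    (lam : ℂ) (hlam : lam = (lam₀ : ℂ) + (ρ : ℂ) * Complex.exp (Complex.I * π / (4 * n + 2)))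
    (Θ : ℂ) (hΘ : Θ = 2 * Complex.I *
      (-(ξ : ℂ) * lam + (2 : ℂ) ^ (2 * n) * lam ^ (2 * n + 1))) :
    Θ.re = -(2 : ℝ) ^ (2 * n + 1) *
        ∑ k ∈ Finset.Icc 2 (2 * n + 1),
          (Nat.choose (2 * n + 1) k : ℝ) * lam₀ ^ (2 * n + 1 - k) * ρ ^ k
            * Real.sin (k * π / (4 * n + 2)) ∧
    Θ.re ≤ -(2 : ℝ) ^ (2 * n + 1) * ρ ^ (2 * n + 1) := by
  set θ := π / (4 * n + 2) with hθ
  have harg : Complex.I * π / (4 * n + 2) = (θ : ℂ) * Complex.I := by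
    rw [hθ]; push_cast; ring
  have hlam_im : lam.im = ρ * Real.sin θ := by
    rw [hlam, harg]
    simp [Complex.exp_ofReal_mul_I_im, Complex.exp_ofReal_mul_I_re]
  have hre : Θ.re = -(2 : ℝ) ^ (2 * n + 1) *
      ∑ k ∈ Finset.Icc 2 (2 * n + 1),
        (Nat.choose (2 * n + 1) k : ℝ) * lam₀ ^ (2 * n + 1 - k) * ρ ^ k * Real.sin (k * θ) := by
    rw [hΘ, re_two_I_mul, hlam_im, hlam, harg, im_ofReal_add_mul_exp_pow,
      sum_range_succ_eq_add_sum_Icc_two _ (by omega), hξ]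
    simp only [Nat.cast_zero, zero_mul, Real.sin_zero, mul_zero, Nat.choose_one_right,
      Nat.add_sub_cancel, Nat.cast_one, one_mul, pow_one, zero_add]
    push_cast
    ring
  simp only [mul_div_assoc, ← hθ]
  refine ⟨hre, ?_⟩
  have hmid : ((2 * n + 1 : ℕ) : ℝ) * θ = π / 2 := by
    rw [hθ]; push_cast; field_simp; ring
  have hlast := pow_mul_sin_le_sum_Icc_two lam₀ ρ θ (by omega : 2 ≤ 2 * n + 1) hlam₀.le hρ.le
    (by positivity) (by rw [hmid]; linarith [pi_pos])
  rw [hmid, sin_pi_div_two, mul_one] at hlast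
  rw [hre]
  exact mul_le_mul_of_nonpos_left hlast (neg_nonpos.2 (by positivity))
end

section
/- Fix n ≥ 1 and let γ ⊂ ℂ be a contour in the left half-plane asymptotic to the rays with arguments ±(n+1)π/(2n+1) at infinity, oriented from bottom to top. Define Ai_{2n+1}(x) = ((−1)^{n+1}/(2πi)) ∫_γ e^{(−1)^n s^{2n+1}/(2n+1) + x s} ds for x ∈ ℝ. Then Ai_{2n+1} is smooth and satisfies the generalized Airy equation d^{2n}/dx^{2n} [Ai_{2n+1}((−1)^{n+1} x)] = x · Ai_{2n+1}((−1)^{n+1} x) for all x ∈ ℝ; equivalently, y(x) = Ai_{2n+1}((−1)^{n+1} x) solves y^{(2n)}(x) = x y(x). -/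
open Real MeasureTheory Filter Metric

namespace GenAiry

noncomputable def intg (n : ℕ) (γ : ℝ → ℂ) (k : ℕ) (z : ℂ) (s : ℝ) : ℂ :=
  (γ s) ^ k * Complex.exp ((-1 : ℂ) ^ n * (γ s) ^ (2 * n + 1) / (2 * (n : ℂ) + 1)
      + z * γ s) * deriv γ s

noncomputable def F (n : ℕ) (γ : ℝ → ℂ) (k : ℕ) (z : ℂ) : ℂ := ∫ s : ℝ, intg n γ k z s

lemma exists_K (n : ℕ) (hn : 1 ≤ n) (γ : ℝ → ℂ) (hγ : Continuous γ)
    (hleft : ∀ s : ℝ, (γ s).re < 0)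
    (hargTop : Tendsto (fun s => Complex.arg (γ s)) atTop
      (nhds (((n : ℝ) + 1) * π / (2 * n + 1))))
    (hargBot : Tendsto (fun s => Complex.arg (γ s)) atBot
      (nhds (-(((n : ℝ) + 1) * π / (2 * n + 1))))) :
    ∃ K : ℝ, 0 ≤ K ∧ ∀ s : ℝ, |(γ s).im| ≤ K * (-(γ s).re) := by
  have hπ := Real.pi_pos
  set θ : ℝ := ((n : ℝ) + 1) * π / (2 * n + 1) with hθdef
  have hn' : (1 : ℝ) ≤ (n : ℝ) := by exact_mod_cast hn
  have hpos : (0 : ℝ) < 2 * (n : ℝ) + 1 := by linarith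
  have hθ1 : π / 2 < θ := by
    rw [hθdef, lt_div_iff₀ hpos]
    nlinarith
  have hθ2 : θ < π := by
    rw [hθdef, div_lt_iff₀ hpos]
    nlinarith
  have hcos : Real.cos θ ≠ 0 :=
    ne_of_lt (Real.cos_neg_of_pi_div_two_lt_of_lt hθ1 (by linarith))
  have hcos' : Real.cos (-θ) ≠ 0 := by rwa [Real.cos_neg]
  have heq : ∀ s : ℝ, Real.tan (Complex.arg (γ s)) = (γ s).im / (γ s).re := fun s =>
    Complex.tan_arg _
  have htop : Tendsto (fun s => (γ s).im / (γ s).re) atTop (nhds (Real.tan θ)) := by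
    have := ((Real.continuousAt_tan.mpr hcos).tendsto).comp hargTop
    exact this.congr fun s => heq s
  have hbot : Tendsto (fun s => (γ s).im / (γ s).re) atBot (nhds (Real.tan (-θ))) := by
    have := ((Real.continuousAt_tan.mpr hcos').tendsto).comp hargBot
    exact this.congr fun s => heq s
  have htop' : ∀ᶠ s in atTop, |(γ s).im / (γ s).re| ≤ |Real.tan θ| + 1 :=
    (htop.abs).eventually_le_const (by linarith [abs_nonneg (Real.tan θ)])
  have hbot' : ∀ᶠ s in atBot, |(γ s).im / (γ s).re| ≤ |Real.tan (-θ)| + 1 :=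
    (hbot.abs).eventually_le_const (by linarith [abs_nonneg (Real.tan (-θ))])
  obtain ⟨A, hA⟩ := eventually_atTop.mp htop'
  obtain ⟨B, hB⟩ := eventually_atBot.mp hbot'
  have hcont : ContinuousOn (fun s => (γ s).im / (γ s).re) (Set.Icc B A) :=
    ((Complex.continuous_im.comp hγ).continuousOn.div
      ((Complex.continuous_re.comp hγ).continuousOn) fun s _ => (hleft s).ne)
  obtain ⟨C, hC⟩ := (isCompact_Icc (a := B) (b := A)).exists_bound_of_continuousOn hcont
  set K : ℝ := max (max (|Real.tan θ| + 1) (|Real.tan (-θ)| + 1)) (max C 0) with hK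
  have hK0 : 0 ≤ K := le_trans (le_max_right C 0) (le_max_right _ _)
  refine ⟨K, hK0, fun s => ?_⟩
  have hres : |(γ s).im / (γ s).re| ≤ K := by
    rcases le_or_gt A s with h | h
    · exact le_trans (hA s h) (le_trans (le_max_left _ _) (le_max_left _ _))
    rcases le_or_gt s B with h' | h'
    · exact le_trans (hB s h') (le_trans (le_max_right _ _) (le_max_left _ _))
    · have := hC s ⟨h'.le, h.le⟩
      rw [Real.norm_eq_abs] at this
      exact le_trans this (le_trans (le_max_left C 0) (le_max_right _ _))
  have hrepos : 0 < -(γ s).re := by linarith [hleft s]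
  rw [abs_div, abs_of_neg (hleft s), div_le_iff₀ hrepos] at hres
  linarith [hres]

lemma norm_intg_le (n k : ℕ) (γ : ℝ → ℂ) {K : ℝ} (hK0 : 0 ≤ K)
    (hK : ∀ s : ℝ, |(γ s).im| ≤ K * (-(γ s).re)) (hleft : ∀ s, (γ s).re < 0)
    (z : ℂ) (x' : ℝ) (hx : x' ≤ z.re - K * |z.im|) (s : ℝ) :
    ‖intg n γ k z s‖ ≤ ‖intg n γ k (x' : ℂ) s‖ := by
  unfold intg
  simp only [norm_mul, Complex.norm_exp]
  gcongr _ * Real.exp ?_ * _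
  simp only [Complex.add_re, Complex.mul_re, Complex.ofReal_re, Complex.ofReal_im]
  have h1 : -(z.im * (γ s).im) ≤ |z.im| * |(γ s).im| := by
    rw [← abs_mul]; exact neg_le_abs _
  have h2 : |z.im| * |(γ s).im| ≤ |z.im| * (K * (-(γ s).re)) :=
    mul_le_mul_of_nonneg_left (hK s) (abs_nonneg _)
  have h3 : (z.re - K * |z.im|) * (γ s).re ≤ x' * (γ s).re :=
    mul_le_mul_of_nonpos_right hx (hleft s).le
  nlinarith [h1, h2, h3]

lemma cont_intg (n k : ℕ) (γ : ℝ → ℂ) (hγ : ContDiff ℝ (⊤ : ℕ∞) γ) (z : ℂ) :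
    Continuous (fun s => intg n γ k z s) := by
  have hγc : Continuous γ := hγ.continuous
  have hγ' : Continuous (deriv γ) := hγ.continuous_deriv (by simp)
  exact ((hγc.pow k).mul (Complex.continuous_exp.comp
    (((continuous_const.mul (hγc.pow _)).div_const _).add (continuous_const.mul hγc)))).mul hγ'

lemma integrable_intg (n k : ℕ) (γ : ℝ → ℂ) (hγ : ContDiff ℝ (⊤ : ℕ∞) γ)
    {K : ℝ} (hK0 : 0 ≤ K)
    (hK : ∀ s : ℝ, |(γ s).im| ≤ K * (-(γ s).re)) (hleft : ∀ s, (γ s).re < 0)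
    (hint : ∀ x : ℝ, ∀ k : ℕ, Integrable (fun s : ℝ => intg n γ k (x : ℂ) s))
    (z : ℂ) : Integrable (fun s => intg n γ k z s) := by
  refine (hint (z.re - K * |z.im|) k).norm.mono'
    ((cont_intg n k γ hγ z).aestronglyMeasurable) ?_
  filter_upwards with s
  exact norm_intg_le n k γ hK0 hK hleft z _ le_rfl s

lemma hasDerivAt_F (n k : ℕ) (γ : ℝ → ℂ) (hγ : ContDiff ℝ (⊤ : ℕ∞) γ)
    {K : ℝ} (hK0 : 0 ≤ K)
    (hK : ∀ s : ℝ, |(γ s).im| ≤ K * (-(γ s).re)) (hleft : ∀ s, (γ s).re < 0)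
    (hint : ∀ x : ℝ, ∀ k : ℕ, Integrable (fun s : ℝ => intg n γ k (x : ℂ) s))
    (z₀ : ℂ) : HasDerivAt (F n γ k) (F n γ (k + 1) z₀) z₀ := by
  set x₁ : ℝ := z₀.re - 1 - K * (|z₀.im| + 1) with hx₁
  have hball : ∀ z ∈ ball z₀ 1, x₁ ≤ z.re - K * |z.im| := by
    intro z hz
    rw [mem_ball, Complex.dist_eq] at hz
    have h1 : |(z - z₀).re| ≤ ‖z - z₀‖ := Complex.abs_re_le_norm _
    have h2 : |(z - z₀).im| ≤ ‖z - z₀‖ := Complex.abs_im_le_norm _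
    rw [Complex.sub_re] at h1
    rw [Complex.sub_im] at h2
    have h3 : |z.im| ≤ |z₀.im| + 1 := by
      have := abs_sub_abs_le_abs_sub z.im z₀.im
      linarith [abs_le.mp h2]
    have h4 : z₀.re - 1 ≤ z.re := by linarith [(abs_le.mp h1).1]
    have h5 : K * |z.im| ≤ K * (|z₀.im| + 1) := mul_le_mul_of_nonneg_left h3 hK0
    rw [hx₁]; linarith
  have key := hasDerivAt_integral_of_dominated_loc_of_deriv_le (μ := volume)
    (F := fun z s => intg n γ k z s) (F' := fun z s => intg n γ (k + 1) z s)
    (x₀ := z₀) (s := ball z₀ 1) (bound := fun s => ‖intg n γ (k + 1) (x₁ : ℂ) s‖) (ball_mem_nhds z₀ one_pos)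
    (Eventually.of_forall fun z => (cont_intg n k γ hγ z).aestronglyMeasurable)
    (integrable_intg n k γ hγ hK0 hK hleft hint z₀)
    ((cont_intg n (k + 1) γ hγ z₀).aestronglyMeasurable)
    (Eventually.of_forall fun s => fun z hz =>
      norm_intg_le n (k + 1) γ hK0 hK hleft z x₁ (hball z hz) s)
    (hint x₁ (k + 1)).norm
    (Eventually.of_forall fun s => fun z _ => ?_)
  · exact key.2
  · have h1 : HasDerivAt (fun z : ℂ =>
        (-1 : ℂ) ^ n * (γ s) ^ (2 * n + 1) / (2 * (n : ℂ) + 1) + z * γ s) (γ s) z :=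
      (hasDerivAt_mul_const (γ s)).const_add _
    have h3 := (h1.cexp.const_mul ((γ s) ^ k)).mul_const (deriv γ s)
    refine h3.congr_deriv ?_
    unfold intg
    ring

lemma ibp (n : ℕ) (γ : ℝ → ℂ) (hγ : ContDiff ℝ (⊤ : ℕ∞) γ)
    (hint : ∀ x : ℝ, ∀ k : ℕ, Integrable (fun s : ℝ => intg n γ k (x : ℂ) s))
    (hvanishTop : ∀ x : ℝ, Tendsto (fun s : ℝ =>
      Complex.exp ((-1 : ℂ) ^ n * (γ s) ^ (2 * n + 1) / (2 * (n : ℂ) + 1) + (x : ℂ) * γ s))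
      atTop (nhds 0))
    (hvanishBot : ∀ x : ℝ, Tendsto (fun s : ℝ =>
      Complex.exp ((-1 : ℂ) ^ n * (γ s) ^ (2 * n + 1) / (2 * (n : ℂ) + 1) + (x : ℂ) * γ s))
      atBot (nhds 0)) (x : ℝ) :
    (-1 : ℂ) ^ n * F n γ (2 * n) (x : ℂ) + (x : ℂ) * F n γ 0 (x : ℂ) = 0 := by
  have h2n1 : (2 * (n : ℂ) + 1) ≠ 0 := by
    have h : ((2 * n + 1 : ℕ) : ℂ) ≠ 0 := Nat.cast_ne_zero.mpr (by omega)
    intro h'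
    apply h
    push_cast
    linear_combination h'
  set g : ℝ → ℂ := fun s => Complex.exp
    ((-1 : ℂ) ^ n * (γ s) ^ (2 * n + 1) / (2 * (n : ℂ) + 1) + (x : ℂ) * γ s) with hg
  set g' : ℝ → ℂ := fun s =>
    (-1 : ℂ) ^ n * intg n γ (2 * n) (x : ℂ) s + (x : ℂ) * intg n γ 0 (x : ℂ) s with hg'
  have hder : ∀ s, HasDerivAt g (g' s) s := by
    intro s
    have hγs : HasDerivAt γ (deriv γ s) s := ((hγ.differentiable (by simp)) s).hasDerivAt
    have hpow : HasDerivAt (fun t => (γ t) ^ (2 * n + 1))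
        (deriv γ s • (((2 * n + 1 : ℕ) : ℂ) * γ s ^ (2 * n + 1 - 1))) s :=
      (hasDerivAt_pow (2 * n + 1) (γ s)).scomp s hγs
    have hu := ((hpow.const_mul ((-1 : ℂ) ^ n)).div_const (2 * (n : ℂ) + 1)).add
      (hγs.const_mul ((x : ℝ) : ℂ))
    have hgd := hu.cexp
    refine hgd.congr_deriv ?_
    simp only [hg', intg, smul_eq_mul, pow_zero, Nat.add_sub_cancel, Pi.add_apply]
    push_cast
    field_simp
  have hi1 : Integrable (fun s => (-1 : ℂ) ^ n * intg n γ (2 * n) (x : ℂ) s) :=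
    (hint x (2 * n)).const_mul _
  have hi2 : Integrable (fun s => (x : ℂ) * intg n γ 0 (x : ℂ) s) :=
    (hint x 0).const_mul _
  have hint' : Integrable g' := hi1.add hi2
  have h0 : ∫ s, g' s = 0 := by
    rw [integral_of_hasDerivAt_of_tendsto hder hint' (hvanishBot x) (hvanishTop x), sub_self]
  rw [hg'] at h0
  rw [integral_add hi1 hi2, integral_const_mul, integral_const_mul] at h0
  exact h0

end GenAiry

open GenAiry

/-- The generalized Airy function
`Ai_{2n+1}(x) = ((−1)^{n+1}/(2πi)) ∫_γ e^{(−1)^n s^{2n+1}/(2n+1) + xs} ds`,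
with `γ` a contour in the left half-plane asymptotic to the rays of arguments
`±(n+1)π/(2n+1)`, is smooth and `y(x) = Ai_{2n+1}((−1)^{n+1}x)` solves the
generalized Airy equation `y^{(2n)}(x) = x y(x)`. -/
theorem generalized_airy_equation (n : ℕ) (hn : 1 ≤ n)
    (γ : ℝ → ℂ) (hγ : ContDiff ℝ (⊤ : ℕ∞) γ)
    (hleft : ∀ s : ℝ, (γ s).re < 0)
    (hargTop : Tendsto (fun s => Complex.arg (γ s)) atTop
      (nhds (((n : ℝ) + 1) * π / (2 * n + 1))))
    (hargBot : Tendsto (fun s => Complex.arg (γ s)) atBot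
      (nhds (-(((n : ℝ) + 1) * π / (2 * n + 1)))))
    (hint : ∀ x : ℝ, ∀ k : ℕ, Integrable (fun s : ℝ =>
      (γ s) ^ k * Complex.exp ((-1 : ℂ) ^ n * (γ s) ^ (2 * n + 1) / (2 * (n : ℂ) + 1)
        + (x : ℂ) * γ s) * deriv γ s))
    (hvanishTop : ∀ x : ℝ, Tendsto (fun s : ℝ =>
      Complex.exp ((-1 : ℂ) ^ n * (γ s) ^ (2 * n + 1) / (2 * (n : ℂ) + 1) + (x : ℂ) * γ s))
      atTop (nhds 0))
    (hvanishBot : ∀ x : ℝ, Tendsto (fun s : ℝ =>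
      Complex.exp ((-1 : ℂ) ^ n * (γ s) ^ (2 * n + 1) / (2 * (n : ℂ) + 1) + (x : ℂ) * γ s))
      atBot (nhds 0))
    (Ai : ℝ → ℂ)
    (hAi : ∀ x : ℝ, Ai x = (-1 : ℂ) ^ (n + 1) / (2 * (π : ℂ) * Complex.I) *
      ∫ s : ℝ, Complex.exp ((-1 : ℂ) ^ n * (γ s) ^ (2 * n + 1) / (2 * (n : ℂ) + 1)
        + (x : ℂ) * γ s) * deriv γ s) :
    ContDiff ℝ (⊤ : ℕ∞) Ai ∧
    ∀ x : ℝ, iteratedDeriv (2 * n) (fun x' : ℝ => Ai ((-1 : ℝ) ^ (n + 1) * x')) x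
      = (x : ℂ) * Ai ((-1 : ℝ) ^ (n + 1) * x) := by
  have hintF : ∀ x : ℝ, ∀ k : ℕ, Integrable (fun s : ℝ => intg n γ k (x : ℂ) s) := by
    intro x k; simpa [intg] using hint x k
  obtain ⟨K, hK0, hK⟩ := exists_K n hn γ hγ.continuous hleft hargTop hargBot
  set C : ℂ := (-1 : ℂ) ^ (n + 1) / (2 * (π : ℂ) * Complex.I) with hC
  have hAiF : Ai = fun x : ℝ => C * F n γ 0 (x : ℂ) := by
    funext x
    rw [hAi x]
    congr 1
    simp [F, intg]
  have hFdiff : Differentiable ℂ (F n γ 0) := fun z =>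
    (hasDerivAt_F n 0 γ hγ hK0 hK hleft hintF z).differentiableAt
  have hCd : ContDiff ℂ ⊤ (fun z => C * F n γ 0 z) := by
    have h : AnalyticOnNhd ℂ (fun z => C * F n γ 0 z) Set.univ :=
      DifferentiableOn.analyticOnNhd ((hFdiff.const_mul C).differentiableOn) isOpen_univ
    exact h.contDiff
  have hsmooth : ContDiff ℝ (⊤ : ℕ∞) Ai := by
    rw [hAiF]
    exact ((hCd.restrict_scalars ℝ).comp Complex.ofRealCLM.contDiff).of_le le_top
  refine ⟨hsmooth, ?_⟩
  have hiter : ∀ m : ℕ, ∀ y : ℝ, iteratedDeriv m Ai y = C * F n γ m ((y : ℝ) : ℂ) := by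
    intro m
    induction m with
    | zero => intro y; simp [hAiF]
    | succ m ih =>
      intro y
      rw [iteratedDeriv_succ]
      have h : iteratedDeriv m Ai = fun y : ℝ => C * F n γ m ((y : ℝ) : ℂ) := funext ih
      rw [h]
      exact (((hasDerivAt_F n m γ hγ hK0 hK hleft hintF ((y : ℝ) : ℂ)).comp_ofReal).const_mul
        C).deriv
  intro x
  have hAC : ContDiff ℝ (2 * n : ℕ) Ai := hsmooth.of_le (by rw [← WithTop.coe_natCast]; exact WithTop.coe_le_coe.mpr le_top)
  have hconst := iteratedDeriv_comp_const_smul hAC ((-1 : ℝ) ^ (n + 1))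
  rw [hconst]
  have hpow1 : ((-1 : ℝ) ^ (n + 1)) ^ (2 * n) = 1 := by
    rw [← pow_mul]
    exact Even.neg_one_pow ⟨(n + 1) * n, by ring⟩
  simp only [hpow1, one_smul]
  set y : ℝ := (-1 : ℝ) ^ (n + 1) * x with hy
  rw [hiter (2 * n) y]
  have hyc : ((y : ℝ) : ℂ) = (-1 : ℂ) ^ (n + 1) * (x : ℂ) := by
    rw [hy]; push_cast; ring
  have hne : ((-1 : ℂ) ^ n) * ((-1 : ℂ) ^ n) = 1 := by
    rw [← pow_add]; exact Even.neg_one_pow ⟨n, rfl⟩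
  have hibp := ibp n γ hγ hintF hvanishTop hvanishBot y
  have hF2 : F n γ (2 * n) ((y : ℝ) : ℂ) =
      (-1 : ℂ) ^ (n + 1) * ((y : ℝ) : ℂ) * F n γ 0 ((y : ℝ) : ℂ) := by
    linear_combination ((-1 : ℂ) ^ n) * hibp - (F n γ (2 * n) ((y : ℝ) : ℂ)) * hne
  simp only [hAiF]
  rw [hF2, hyc]
  linear_combination (C * (x : ℂ) * F n γ 0 ((-1 : ℂ) ^ (n + 1) * (x : ℂ))) * hne
end
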